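/- A subset A of ω^ω is almost Baire if and only if either there is some t ∈ ω^{<ω} such that A is comeager in N_t, or ω^ω ∖ A is comeager. -/

import Mathlib

universe u

noncomputable section

/-! ## Sequences of ordinals

`SeqLT o v` is the set `v^{<o}` of all sequences of ordinals `< v` of length `< o`
(for `o > 0`; values beyond the length are normalized to `0`).
`SeqFull o v` is the generalized Baire space `v^o` of all functions from ordinals `< o`
to ordinals `< v`. -/

/-- An element of `v^{<o}`: a sequence of ordinals `< v` of length `< o`. -/
structure SeqLT (o v : Ordinal.{u}) : Type (u + 1) where
  len : Ordinal.{u}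
  len_lt : len < o ⊔ 1
  val : Ordinal.{u} → Ordinal.{u}
  val_lt : ∀ β, β < len → val β < v
  val_zero : ∀ β, len ≤ β → val β = 0

namespace SeqLT

variable {o v : Ordinal.{u}}

/-- `s ⊆ t`, i.e. `t` end-extends `s`. -/
protected def le (s t : SeqLT o v) : Prop :=
  s.len ≤ t.len ∧ ∀ β, β < s.len → s.val β = t.val β

/-- `s ⊊ t`, i.e. `t` properly end-extends `s`. -/
protected def slt (s t : SeqLT o v) : Prop :=
  s.le t ∧ s.len < t.len

/-- The empty sequence. -/
protected def empty (o v : Ordinal.{u}) : SeqLT o v where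
  len := 0
  len_lt := lt_sup_iff.mpr (Or.inr zero_lt_one)
  val := fun _ => 0
  val_lt := fun β h => absurd h (show ¬ β < 0 from not_lt_of_ge zero_le)
  val_zero := fun _ _ => rfl

/-- `s⌢⟨β⟩`: the sequence `s` extended by the single value `β`. -/
def snoc (s : SeqLT o v) (β : Ordinal.{u}) : SeqLT o v :=
  if h : s.len + 1 < o ⊔ 1 ∧ β < v then
    { len := s.len + 1
      len_lt := h.1
      val := fun γ => if γ = s.len then β else s.val γ
      val_lt := fun γ hγ => by
        rcases eq_or_ne γ s.len with rfl | hne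
        · simpa using h.2
        · simp only [if_neg hne]
          refine s.val_lt γ (lt_of_le_of_ne ?_ hne)
          rw [Ordinal.add_one_eq_succ] at hγ
          exact Order.lt_succ_iff.mp hγ
      val_zero := fun γ hγ => by
        have h1 : s.len < γ :=
          lt_of_lt_of_le (by rw [Ordinal.add_one_eq_succ]; exact Order.lt_succ s.len) hγ
        simp only [if_neg h1.ne']
        exact s.val_zero γ h1.le }
  else s

protected theorem le_refl (s : SeqLT o v) : s.le s :=
  ⟨le_rfl, fun _ _ => rfl⟩

protected theorem le_trans {s t u : SeqLT o v} (h1 : s.le t) (h2 : t.le u) : s.le u :=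
  ⟨h1.1.trans h2.1, fun β hβ => (h1.2 β hβ).trans (h2.2 β (lt_of_lt_of_le hβ h1.1))⟩

end SeqLT

/-- An element of the generalized Baire space `v^o`. -/
structure SeqFull (o v : Ordinal.{u}) : Type (u + 1) where
  val : Ordinal.{u} → Ordinal.{u}
  val_lt : ∀ β, β < o → val β < v
  val_zero : ∀ β, o ≤ β → val β = 0

/-- The restriction `x ↾ β` of `x : v^o` to an ordinal `β < o`. -/
def SeqFull.res {o v : Ordinal.{u}} (x : SeqFull o v) (β : Ordinal.{u}) : SeqLT o v :=
  if h : β < o ⊔ 1 then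
    { len := β
      len_lt := h
      val := fun γ => if γ < β then x.val γ else 0
      val_lt := fun γ hγ => by
        simp only [if_pos hγ]
        rcases lt_sup_iff.mp h with h' | h'
        · exact x.val_lt γ (hγ.trans h')
        · rw [Ordinal.lt_one_iff_zero] at h'
          exact absurd (h' ▸ hγ) (show ¬ γ < 0 from not_lt_of_ge zero_le)
      val_zero := fun γ hγ => if_neg (not_lt.mpr hγ) }
  else SeqLT.empty o v

/-- `s ⊆ x`: the sequence `s` is an initial segment of `x : v^o`. -/
def SeqLT.prefixOf {o v : Ordinal.{u}} (s : SeqLT o v) (x : SeqFull o v) : Prop :=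
  ∀ β, β < s.len → s.val β = x.val β

/-! ## The bounded topology -/

/-- The basic open set `N_t`. -/
def basicOpen {o v : Ordinal.{u}} (t : SeqLT o v) : Set (SeqFull o v) :=
  {x | t.prefixOf x}

/-- The bounded (standard) topology on the generalized Baire space, generated by the
basic open sets `N_t`. -/
instance (o v : Ordinal.{u}) : TopologicalSpace (SeqFull o v) :=
  TopologicalSpace.generateFrom {U | ∃ t : SeqLT o v, U = basicOpen t}

/-- `A` is a nowhere dense subset of `B` (in the subspace topology on `B`). -/
def NowhereDenseIn {o v : Ordinal.{u}} (A B : Set (SeqFull o v)) : Prop :=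
  A ⊆ B ∧ interior (closure {x : ↥B | (x : SeqFull o v) ∈ A}) = ∅

/-- `A` is `o`-meager in `B`: `A ∩ B` is the union of (card of) `o` many nowhere dense
subsets of `B`. -/
def MeagerIn {o v : Ordinal.{u}} (A B : Set (SeqFull o v)) : Prop :=
  ∃ F : {β : Ordinal.{u} // β < o} → Set (SeqFull o v),
    (∀ i, NowhereDenseIn (F i) B) ∧ A ∩ B = ⋃ i, F i

/-- `A` is comeager in `B`: `B \ A` is meager in `B`. -/
def ComeagerIn {o v : Ordinal.{u}} (A B : Set (SeqFull o v)) : Prop :=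
  MeagerIn (B \ A) B

/-- `A` has the `o`-Baire property: for some open `U`, `A △ U` is meager. -/
def BaireSet {o v : Ordinal.{u}} (A : Set (SeqFull o v)) : Prop :=
  ∃ U : Set (SeqFull o v), IsOpen U ∧ MeagerIn (symmDiff A U) Set.univ

/-! ## Homomorphisms of `v^{<o}` -/

/-- A homomorphism: strictly extension-preserving map of `v^{<o}` to itself. -/
def IsHom {o v : Ordinal.{u}} (f : SeqLT o v → SeqLT o v) : Prop :=
  ∀ s t : SeqLT o v, s.slt t → (f s).slt (f t)

/-- `f` is dense: for every `s` and every `t ⊇ f(s)` there is `β < v` with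
`f(s⌢⟨β⟩) ⊇ t`. -/
def IsDenseMap {o v : Ordinal.{u}} (f : SeqLT o v → SeqLT o v) : Prop :=
  ∀ s t : SeqLT o v, (f s).le t → ∃ β, β < v ∧ t.le (f (s.snoc β))

/-- `u = ⋃_{α<γ} s α` for a chain `s`. -/
def IsUnionOfChain {o v : Ordinal.{u}} (u : SeqLT o v) (γ : Ordinal.{u})
    (s : Ordinal.{u} → SeqLT o v) : Prop :=
  (∀ α, α < γ → (s α).le u) ∧ ∀ β, β < u.len → ∃ α, α < γ ∧ β < (s α).len

/-- `f` is continuous: for every limit `γ < o` and every strictly increasing sequence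
`⟨s_α : α < γ⟩`, `f(⋃_{α<γ} s_α) = ⋃_{α<γ} f(s_α)`. -/
def IsContinuousMap {o v : Ordinal.{u}} (f : SeqLT o v → SeqLT o v) : Prop :=
  ∀ γ : Ordinal.{u}, Order.IsSuccLimit γ → γ < o →
    ∀ s : Ordinal.{u} → SeqLT o v, (∀ α β, α < β → β < γ → (s α).slt (s β)) →
      ∀ u : SeqLT o v, IsUnionOfChain u γ s → IsUnionOfChain (f u) γ fun α => f (s α)

/-- `y = f*(x) = ⋃_{α<o} f(x↾α)` for a homomorphism `f`. -/
def FStarVal {o v : Ordinal.{u}} (f : SeqLT o v → SeqLT o v) (x y : SeqFull o v) : Prop :=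
  (∀ α, α < o → (f (x.res α)).prefixOf y) ∧
    ∀ β, β < o → ∃ α, α < o ∧ β < (f (x.res α)).len

/-! ## Clubs and the almost Baire property -/

/-- `C` is a club (closed unbounded set) in the ordinal `o`. -/
def IsClubIn (C : Set Ordinal.{u}) (o : Ordinal.{u}) : Prop :=
  (∀ γ ∈ C, γ < o) ∧ (∀ β, β < o → ∃ γ ∈ C, β ≤ γ) ∧
    ∀ β, β < o → 0 < β → (∀ γ, γ < β → ∃ ξ ∈ C, γ < ξ ∧ ξ < β) → β ∈ C

/-- The set of functions coding elements of the club filter as characteristic functions. -/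
def ClSet (o v : Ordinal.{u}) : Set (SeqFull o v) :=
  {x | ∃ C : Set Ordinal.{u}, IsClubIn C o ∧ ∀ i ∈ C, x.val i ≠ 0}

/-- The set of functions coding elements of the nonstationary ideal. -/
def NsSet (o v : Ordinal.{u}) : Set (SeqFull o v) :=
  {x | ∃ C : Set Ordinal.{u}, IsClubIn C o ∧ ∀ i ∈ C, x.val i = 0}

/-- `A` is almost Baire: there is a dense homomorphism `f` with `ran f* ⊆ A`, or a dense
continuous homomorphism `f` with `f ∅ = ∅` and `ran f* ⊆ Aᶜ`. -/
def AlmostBaire {o v : Ordinal.{u}} (A : Set (SeqFull o v)) : Prop :=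
  ∃ f : SeqLT o v → SeqLT o v, IsHom f ∧ IsDenseMap f ∧
    ((∀ x y, FStarVal f x y → y ∈ A) ∨
      ((∀ x y, FStarVal f x y → y ∉ A) ∧ IsContinuousMap f ∧
        f (SeqLT.empty o v) = SeqLT.empty o v))

/-! ## Banach–Mazur games of length `o`

A run of the game is a strictly increasing sequence `⟨s_α : α < o⟩` in `v^{<o}`;
player I plays at even positions (`0` and limits count as even), player II at odd ones.
In the game `G^t` the first move of player I must extend `t`; taking `t = ∅` gives the
plain Banach–Mazur game. -/

/-- `γ` is an even ordinal (`0` and limits are even). -/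
def EvenOrd (γ : Ordinal.{u}) : Prop := ∃ δ : Ordinal.{u}, γ = 2 * δ

/-- `γ` is an odd ordinal. -/
def OddOrd (γ : Ordinal.{u}) : Prop := ∃ δ : Ordinal.{u}, γ = 2 * δ + 1

/-- The moves of a (partial) run, as a function on ordinals. -/
abbrev Play (o v : Ordinal.{u}) := Ordinal.{u} → SeqLT o v

/-- A strategy: given the length of the current position and the moves so far,
produce the next move. -/
abbrev Strat (o v : Ordinal.{u}) := Ordinal.{u} → Play o v → SeqLT o v

/-- `p` is a legal partial run of length `γ` of the game `G^t`: strictly increasing moves,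
the first move extends `t`, and the moves beyond `γ` are normalized to `∅`. -/
def IsPos {o v : Ordinal.{u}} (t : SeqLT o v) (p : Play o v) (γ : Ordinal.{u}) : Prop :=
  (∀ α β, α < β → β < γ → (p α).slt (p β)) ∧ (0 < γ → t.le (p 0)) ∧
    ∀ α, γ ≤ α → p α = SeqLT.empty o v

/-- The restriction of a run to its first `γ` moves. -/
def resPlay {o v : Ordinal.{u}} (p : Play o v) (γ : Ordinal.{u}) : Play o v :=
  fun α => if α < γ then p α else SeqLT.empty o v

/-- `m` is a legal move at the position `p` of length `γ` in the game `G^t`. -/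
def MoveOK {o v : Ordinal.{u}} (t : SeqLT o v) (p : Play o v) (γ : Ordinal.{u})
    (m : SeqLT o v) : Prop :=
  (∀ α, α < γ → (p α).slt m) ∧ (γ = 0 → t.le m)

/-- `σ` is a strategy for player I in `G^t`: it assigns a legal move to every legal
position of even length. -/
def LegalI {o v : Ordinal.{u}} (t : SeqLT o v) (σ : Strat o v) : Prop :=
  ∀ γ, γ < o → EvenOrd γ → ∀ p, IsPos t p γ → MoveOK t p γ (σ γ p)

/-- `σ` is a strategy for player II in `G^t`: it assigns a legal move to every legal
position of odd length. -/
def LegalII {o v : Ordinal.{u}} (t : SeqLT o v) (σ : Strat o v) : Prop :=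
  ∀ γ, γ < o → OddOrd γ → ∀ p, IsPos t p γ → MoveOK t p γ (σ γ p)

/-- The first `γ` moves of `p` follow the strategy `σ` of player I. -/
def FollowsI {o v : Ordinal.{u}} (σ : Strat o v) (p : Play o v) (γ : Ordinal.{u}) : Prop :=
  ∀ α, α < γ → EvenOrd α → p α = σ α (resPlay p α)

/-- The first `γ` moves of `p` follow the strategy `σ` of player II. -/
def FollowsII {o v : Ordinal.{u}} (σ : Strat o v) (p : Play o v) (γ : Ordinal.{u}) : Prop :=
  ∀ α, α < γ → OddOrd α → p α = σ α (resPlay p α)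

/-- `x = ⋃_{α<o} p α` is the outcome of the complete run `p`. -/
def IsOutcome {o v : Ordinal.{u}} (p : Play o v) (x : SeqFull o v) : Prop :=
  (∀ α, α < o → (p α).prefixOf x) ∧ ∀ β, β < o → ∃ α, α < o ∧ β < (p α).len

/-- Player I has a winning strategy in the Banach–Mazur game `G^t(A)` of length `o`. -/
def WinIStrat {o v : Ordinal.{u}} (t : SeqLT o v) (A : Set (SeqFull o v)) : Prop :=
  ∃ σ : Strat o v, LegalI t σ ∧
    ∀ p : Play o v, IsPos t p o → FollowsI σ p o → ∃ x, IsOutcome p x ∧ x ∈ A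

/-- Player II has a winning strategy in the Banach–Mazur game `G^t(A)` of length `o`. -/
def WinIIStrat {o v : Ordinal.{u}} (t : SeqLT o v) (A : Set (SeqFull o v)) : Prop :=
  ∃ σ : Strat o v, LegalII t σ ∧
    ∀ p : Play o v, IsPos t p o → FollowsII σ p o → ∃ x, IsOutcome p x ∧ x ∉ A

/-- `σ` is a tactic for player II: its moves depend only on the union of the previous moves. -/
def IsTacticII {o v : Ordinal.{u}} (t : SeqLT o v) (σ : Strat o v) : Prop :=
  ∃ f : SeqLT o v → SeqLT o v, ∀ γ, γ < o → OddOrd γ → ∀ p, IsPos t p γ →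
    ∀ u, IsUnionOfChain u γ p → σ γ p = f u

/-- Player II has a winning tactic in the Banach–Mazur game `G^t(A)` of length `o`. -/
def WinIITactic {o v : Ordinal.{u}} (t : SeqLT o v) (A : Set (SeqFull o v)) : Prop :=
  ∃ σ : Strat o v, LegalII t σ ∧ IsTacticII t σ ∧
    ∀ p : Play o v, IsPos t p o → FollowsII σ p o → ∃ x, IsOutcome p x ∧ x ∉ A

/-! ## Trees and perfect sets -/

/-- A subtree of `v^{<o}`: a downwards closed set of sequences. -/
def IsSubtree {o v : Ordinal.{u}} (T : Set (SeqLT o v)) : Prop :=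
  ∀ s ∈ T, ∀ r : SeqLT o v, r.le s → r ∈ T

/-- `T` is closed: every strictly increasing sequence in `T` of length `< o` has an
upper bound in `T`. -/
def TreeClosed {o v : Ordinal.{u}} (T : Set (SeqLT o v)) : Prop :=
  ∀ γ : Ordinal.{u}, γ < o → ∀ s : Ordinal.{u} → SeqLT o v,
    (∀ α β, α < β → β < γ → (s α).slt (s β)) → (∀ α, α < γ → s α ∈ T) →
      ∃ b ∈ T, ∀ α, α < γ → (s α).le b

/-- `t` is a direct successor of `s`. -/
def IsDirectSucc {o v : Ordinal.{u}} (s t : SeqLT o v) : Prop :=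
  s.slt t ∧ t.len = s.len + 1

/-- `T` is a perfect tree: a (nonempty) closed subtree whose splitting nodes are cofinal. -/
def IsPerfectTree {o v : Ordinal.{u}} (T : Set (SeqLT o v)) : Prop :=
  T.Nonempty ∧ IsSubtree T ∧ TreeClosed T ∧
    ∀ s ∈ T, ∃ t ∈ T, s.le t ∧
      ∃ t₁ ∈ T, ∃ t₂ ∈ T, IsDirectSucc t t₁ ∧ IsDirectSucc t t₂ ∧ t₁ ≠ t₂

/-- The body `[T]` of a tree `T`: the set of branches of length `o` through `T`. -/
def treeBody {o v : Ordinal.{u}} (T : Set (SeqLT o v)) : Set (SeqFull o v) :=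
  {x | ∀ α, α < o → x.res α ∈ T}

/-! If `f` is a dense homomorphism, then a point `y ∈ N_{f(∅)}` lies in `ran f*`
unless for some `s` the node `f(s)` is an initial segment of `y` while none of the `f(s⌢⟨β⟩)` is;
by density, each of these countably many sets of bad points is nowhere dense, so `ran f*` is
comeager in `N_{f(∅)}`. Conversely, if `N_t ∖ A` is covered by nowhere dense sets `G_n`, build `f`
with `f(∅) = t` so that `f(s⌢⟨β⟩)` first extends the `β`-th node of an enumeration of `ω^{<ω}`
(when possible, which makes `f` dense) and then leaves `G_{|s|}`; every branch of `f*` then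
lies in `A`. For `t = ∅` the resulting `f` is continuous, as there are no limits below `ω`. -/

open scoped Ordinal

open Order Set TopologicalSpace

namespace SeqLT

variable {o v : Ordinal.{u}}

instance : Inhabited (SeqLT o v) := ⟨SeqLT.empty o v⟩

protected theorem ext {s t : SeqLT o v} (hlen : s.len = t.len)
    (hval : ∀ β, β < s.len → s.val β = t.val β) : s = t := by
  obtain ⟨l, hl, f, hf, hf0⟩ := s
  obtain ⟨l', hl', g, hg, hg0⟩ := t
  dsimp only at hlen hval
  subst hlen
  obtain rfl : f = g := funext fun β =>
    (lt_or_ge β l).elim (hval β) fun h => (hf0 β h).trans (hg0 β h).symm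
  rfl

theorem slt_of_le_of_slt {s t r : SeqLT o v} (h₁ : s.le t) (h₂ : t.slt r) : s.slt r :=
  ⟨SeqLT.le_trans h₁ h₂.1, h₁.1.trans_lt h₂.2⟩

theorem slt_trans {s t r : SeqLT o v} (h₁ : s.slt t) (h₂ : t.slt r) : s.slt r :=
  slt_of_le_of_slt h₁.1 h₂

theorem len_le (s : SeqLT o v) : s.len ≤ o :=
  lt_add_one_iff.mp (s.len_lt.trans_le (sup_le le_self_add le_add_self))

theorem len_lt_of_isSuccLimit (ho : IsSuccLimit o) (s : SeqLT o v) : s.len < o := by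
  have h1 : 1 ≤ o := one_le_iff_ne_zero.mpr ho.ne_bot
  simpa [sup_eq_left.mpr h1] using s.len_lt

theorem len_add_one_lt (ho : IsSuccLimit o) (s : SeqLT o v) : s.len + 1 < o ⊔ 1 :=
  (ho.succ_lt (s.len_lt_of_isSuccLimit ho)).trans_le le_sup_left

section Snoc

variable (ho : IsSuccLimit o) {s : SeqLT o v} {β : Ordinal.{u}} (hβ : β < v)
include ho hβ

theorem snoc_len : (s.snoc β).len = s.len + 1 := by
  rw [snoc, dif_pos ⟨s.len_add_one_lt ho, hβ⟩]

theorem snoc_val_of_lt {γ : Ordinal.{u}} (hγ : γ < s.len) : (s.snoc β).val γ = s.val γ := by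
  rw [snoc, dif_pos ⟨s.len_add_one_lt ho, hβ⟩]
  exact if_neg hγ.ne

theorem snoc_val_len : (s.snoc β).val s.len = β := by
  rw [snoc, dif_pos ⟨s.len_add_one_lt ho, hβ⟩]
  exact if_pos rfl

theorem slt_snoc : s.slt (s.snoc β) :=
  ⟨⟨(snoc_len ho hβ).symm ▸ le_self_add, fun _ hγ => (snoc_val_of_lt ho hβ hγ).symm⟩,
    (snoc_len ho hβ).symm ▸ lt_add_one _⟩

end Snoc

theorem prefixOf_of_le {s t : SeqLT o v} {x : SeqFull o v} (h : s.le t) (ht : t.prefixOf x) :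
    s.prefixOf x :=
  fun β hβ => (h.2 β hβ).trans (ht β (hβ.trans_le h.1))

theorem le_or_le_of_prefixOf {s t : SeqLT o v} {x : SeqFull o v} (hs : s.prefixOf x)
    (ht : t.prefixOf x) : s.le t ∨ t.le s := by
  rcases le_total s.len t.len with h | h
  · exact Or.inl ⟨h, fun β hβ => (hs β hβ).trans (ht β (hβ.trans_le h)).symm⟩
  · exact Or.inr ⟨h, fun β hβ => (ht β hβ).trans (hs β (hβ.trans_le h)).symm⟩

end SeqLT

namespace SeqFull

variable {o v : Ordinal.{u}} (x : SeqFull o v) {α : Ordinal.{u}}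

theorem res_len (h : α < o) : (x.res α).len = α := by
  rw [res, dif_pos (lt_sup_of_lt_left h)]

theorem res_val (h : α < o) {γ : Ordinal.{u}} (hγ : γ < α) : (x.res α).val γ = x.val γ := by
  rw [res, dif_pos (lt_sup_of_lt_left h)]
  exact if_pos hγ

theorem res_zero : x.res 0 = SeqLT.empty o v := by
  rw [res, dif_pos (lt_sup_of_lt_right zero_lt_one)]
  refine SeqLT.ext rfl fun _ hγ => (hγ.not_ge zero_le).elim

theorem res_add_one (ho : IsSuccLimit o) (h : α < o) :
    x.res (α + 1) = (x.res α).snoc (x.val α) := by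
  have hα1 : α + 1 < o := ho.succ_lt h
  have hv : x.val α < v := x.val_lt α h
  refine SeqLT.ext (by rw [res_len _ hα1, SeqLT.snoc_len ho hv, res_len _ h]) fun γ hγ => ?_
  rw [res_len _ hα1] at hγ
  rw [res_val _ hα1 hγ]
  rcases (lt_add_one_iff.mp hγ).lt_or_eq with hγα | rfl
  · rw [SeqLT.snoc_val_of_lt ho hv ((x.res_len h).symm ▸ hγα), res_val _ h hγα]
  · have hlast := SeqLT.snoc_val_len ho hv (s := x.res γ)
    rw [x.res_len h] at hlast
    exact hlast.symm

end SeqFull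

section Topology

variable {o v : Ordinal.{u}}

theorem isOpen_basicOpen (t : SeqLT o v) : IsOpen (basicOpen t) :=
  GenerateOpen.basic _ ⟨t, rfl⟩

theorem basicOpen_anti {s t : SeqLT o v} (h : s.le t) : basicOpen t ⊆ basicOpen s :=
  fun _ => SeqLT.prefixOf_of_le h

theorem basicOpen_empty : basicOpen (SeqLT.empty o v) = univ :=
  eq_univ_of_forall fun _ _ h => (h.not_ge zero_le).elim

theorem basicOpen_nonempty (hv : 0 < v) (t : SeqLT o v) : (basicOpen t).Nonempty :=
  ⟨{ val := t.val
     val_lt := fun β _ => (lt_or_ge β t.len).elim (t.val_lt β) fun h => t.val_zero β h ▸ hv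
     val_zero := fun β h => t.val_zero β (t.len_le.trans h) }, fun _ _ => rfl⟩

theorem isTopologicalBasis_basicOpen :
    IsTopologicalBasis {U : Set (SeqFull o v) | ∃ t, U = basicOpen t} where
  exists_subset_inter := by
    rintro _ ⟨s, rfl⟩ _ ⟨t, rfl⟩ x ⟨hs, ht⟩
    rcases SeqLT.le_or_le_of_prefixOf hs ht with h | h
    · exact ⟨_, ⟨t, rfl⟩, ht, subset_inter (basicOpen_anti h) subset_rfl⟩
    · exact ⟨_, ⟨s, rfl⟩, hs, subset_inter subset_rfl (basicOpen_anti h)⟩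
  sUnion_eq := sUnion_eq_univ_iff.mpr fun _ =>
    ⟨basicOpen (SeqLT.empty o v), ⟨_, rfl⟩, by rw [basicOpen_empty]; trivial⟩
  eq_generateFrom := rfl

theorem isNowhereDense_iff (hv : 0 < v) {S : Set (SeqFull o v)} :
    IsNowhereDense S ↔ ∀ r : SeqLT o v, ∃ r', r.le r' ∧ Disjoint (basicOpen r') S := by
  constructor
  · intro hS r
    have hnot : ¬ basicOpen r ⊆ closure S := fun hsub =>
      (basicOpen_nonempty hv r).ne_empty
        (subset_empty_iff.mp (hS ▸ (isOpen_basicOpen r).subset_interior_iff.mpr hsub))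
    obtain ⟨w, hwr, hwS⟩ := not_subset.mp hnot
    obtain ⟨_, ⟨t, rfl⟩, hwt, hdisj⟩ : ∃ U ∈ {U | ∃ t, U = basicOpen t}, w ∈ U ∧ U ∩ S = ∅ := by
      simpa [isTopologicalBasis_basicOpen.mem_closure_iff, not_nonempty_iff_eq_empty] using hwS
    rcases SeqLT.le_or_le_of_prefixOf hwr hwt with h | h
    · exact ⟨t, h, disjoint_iff_inter_eq_empty.mpr hdisj⟩
    · exact ⟨r, SeqLT.le_refl r,
        disjoint_iff_inter_eq_empty.mpr (subset_empty_iff.mp (hdisj ▸ inter_subset_inter_left S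
          (basicOpen_anti h)))⟩
  · intro h
    refine eq_empty_of_forall_notMem fun z hz => ?_
    obtain ⟨_, ⟨t, rfl⟩, -, hsub⟩ :=
      isTopologicalBasis_basicOpen.exists_subset_of_mem_open hz isOpen_interior
    obtain ⟨r', hr', hdisj⟩ := h t
    obtain ⟨y, hy⟩ := basicOpen_nonempty hv r'
    exact (hdisj.closure_right (isOpen_basicOpen r')).notMem_of_mem_left hy
      (interior_subset (hsub (basicOpen_anti hr' hy)))

theorem exists_slt_disjoint (ho : IsSuccLimit o) (hv : 0 < v) {S : Set (SeqFull o v)}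
    (hS : IsNowhereDense S) (r : SeqLT o v) : ∃ r', r.slt r' ∧ Disjoint (basicOpen r') S := by
  obtain ⟨r', hr', hdisj⟩ := (isNowhereDense_iff hv).mp hS r
  have hsnoc := SeqLT.slt_snoc ho hv (s := r')
  exact ⟨_, SeqLT.slt_of_le_of_slt hr' hsnoc, hdisj.mono_left (basicOpen_anti hsnoc.1)⟩

theorem IsNowhereDense.preimage {X Y : Type*} [TopologicalSpace X] [TopologicalSpace Y]
    {f : Y → X} (hc : Continuous f) (ho : IsOpenMap f) {S : Set X} (hS : IsNowhereDense S) :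
    IsNowhereDense (f ⁻¹' S) :=
  subset_empty_iff.mp <| calc
    interior (closure (f ⁻¹' S)) ⊆ interior (f ⁻¹' closure S) :=
      interior_mono (hc.closure_preimage_subset S)
    _ = f ⁻¹' interior (closure S) := (ho.preimage_interior_eq_interior_preimage hc _).symm
    _ = ∅ := by rw [hS, preimage_empty]

theorem nowhereDenseIn_iff {S B : Set (SeqFull o v)} (hB : IsOpen B) :
    NowhereDenseIn S B ↔ S ⊆ B ∧ IsNowhereDense S := by
  refine and_congr_right fun hSB => ⟨fun h => ?_, fun h => ?_⟩
  · simpa [Subtype.image_preimage_coe, inter_eq_right.mpr hSB] using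
      IsNowhereDense.image_val (s := Subtype.val ⁻¹' S) h
  · exact h.preimage continuous_subtype_val hB.isOpenMap_subtype_val

theorem isContinuousMap_of_le_omega0 (ho : o ≤ ω) (f : SeqLT o v → SeqLT o v) :
    IsContinuousMap f :=
  fun _ hγ hγo => absurd (hγo.trans_le ho) (Ordinal.omega0_le_of_isSuccLimit hγ).not_gt

end Topology

/-- For `β ≥ ω` this is the junk value `0`. -/
def Ordinal.toNat (β : Ordinal.{u}) : ℕ := Cardinal.toNat β.card

theorem Ordinal.toNat_natCast (n : ℕ) : (n : Ordinal.{u}).toNat = n := by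
  rw [Ordinal.toNat, Ordinal.card_nat, Cardinal.toNat_natCast]

theorem Ordinal.natCast_toNat {β : Ordinal.{u}} (h : β < ω) : (β.toNat : Ordinal) = β := by
  obtain ⟨n, rfl⟩ := Ordinal.lt_omega0.mp h
  rw [Ordinal.toNat_natCast]

instance : Countable {β : Ordinal.{u} // β < ω} :=
  Function.Injective.countable (f := fun β => β.1.toNat) fun β γ h => Subtype.ext <| by
    rw [← Ordinal.natCast_toNat β.2, ← Ordinal.natCast_toNat γ.2]
    exact congrArg _ h

instance : Countable (SeqLT.{u} ω ω) := by
  refine Function.Injective.countable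
    (f := fun s : SeqLT ω ω => (List.range s.len.toNat).map fun k : ℕ => (s.val k).toNat) ?_
  intro s t h
  have hs := s.len_lt_of_isSuccLimit Ordinal.isSuccLimit_omega0
  have ht := t.len_lt_of_isSuccLimit Ordinal.isSuccLimit_omega0
  have hlenNat : s.len.toNat = t.len.toNat := by simpa using congrArg List.length h
  have hlen : s.len = t.len := by
    rw [← Ordinal.natCast_toNat hs, hlenNat, Ordinal.natCast_toNat ht]
  refine SeqLT.ext hlen fun β hβ => ?_
  obtain ⟨k, rfl⟩ := Ordinal.lt_omega0.mp (hβ.trans hs)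
  have hk : k < s.len.toNat := by
    rwa [← Nat.cast_lt (α := Ordinal), Ordinal.natCast_toNat hs]
  have hval := congrArg (·[k]?) h
  simp only [List.getElem?_map, List.getElem?_range hk, List.getElem?_range (hlenNat ▸ hk),
    Option.map_some, Option.some.injEq] at hval
  rw [← Ordinal.natCast_toNat (s.val_lt _ hβ), hval,
    Ordinal.natCast_toNat (t.val_lt _ (hlen ▸ hβ))]

theorem IsMeagre.exists_nat_isNowhereDense {X : Type*} [TopologicalSpace X] {M : Set X}
    (hM : IsMeagre M) : ∃ G : ℕ → Set X, (∀ n, IsNowhereDense (G n)) ∧ M ⊆ ⋃ n, G n := by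
  obtain ⟨S, hnd, hc, hsub⟩ := isMeagre_iff_countable_union_isNowhereDense.mp hM
  obtain ⟨G, hG⟩ := (hc.insert ∅).exists_eq_range (insert_nonempty _ _)
  refine ⟨G, fun n => ?_, hsub.trans ?_⟩
  · rcases (hG ▸ mem_range_self n : G n ∈ insert ∅ S) with h | h
    · exact h ▸ isNowhereDense_empty
    · exact hnd _ h
  · rw [← sUnion_range, ← hG]
    exact sUnion_mono (subset_insert _ _)

theorem meagerIn_iff_isMeagre {v : Ordinal.{u}} {M B : Set (SeqFull ω v)} (hB : IsOpen B) :
    MeagerIn M B ↔ IsMeagre (M ∩ B) := by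
  constructor
  · rintro ⟨F, hF, hMB⟩
    exact hMB ▸ isMeagre_iUnion fun i => ((nowhereDenseIn_iff hB).mp (hF i)).2.isMeagre
  · intro h
    obtain ⟨G, hG, hcover⟩ := h.exists_nat_isNowhereDense
    refine ⟨fun i => G i.1.toNat ∩ (M ∩ B), fun i => (nowhereDenseIn_iff hB).mpr
      ⟨inter_subset_right.trans inter_subset_right, (hG _).mono inter_subset_left⟩, ?_⟩
    refine Subset.antisymm (fun y hy => ?_) (iUnion_subset fun _ => inter_subset_right)
    obtain ⟨n, hn⟩ := mem_iUnion.mp (hcover hy)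
    exact mem_iUnion.mpr ⟨⟨n, Ordinal.natCast_lt_omega0 n⟩, (Ordinal.toNat_natCast n).symm ▸ hn, hy⟩

theorem comeagerIn_iff_isMeagre {v : Ordinal.{u}} {A B : Set (SeqFull ω v)} (hB : IsOpen B) :
    ComeagerIn A B ↔ IsMeagre (B \ A) := by
  rw [ComeagerIn, meagerIn_iff_isMeagre hB, inter_eq_left.mpr sdiff_subset]

theorem SeqFull.exists_res_eq {v : Ordinal.{u}} (c : ℕ → SeqLT ω v)
    (hlen : ∀ n, (c n).len = n) (hc : ∀ n, (c n).le (c (n + 1))) :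
    ∃ x : SeqFull ω v, ∀ n : ℕ, x.res n = c n := by
  have hmono : ∀ {m n}, m ≤ n → (c m).le (c n) := fun h =>
    Nat.le_induction (SeqLT.le_refl _) (fun n _ ih => SeqLT.le_trans ih (hc n)) _ h
  have hmem {β : Ordinal} (hβ : β < ω) : β < (c (β.toNat + 1)).len := by
    rw [hlen, Nat.cast_succ, Ordinal.natCast_toNat hβ]
    exact lt_add_one β
  let x : SeqFull ω v :=
    { val := fun β => if β < ω then (c (β.toNat + 1)).val β else 0
      val_lt := fun β hβ => by rw [if_pos hβ]; exact (c _).val_lt β (hmem hβ)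
      val_zero := fun β hβ => if_neg hβ.not_gt }
  refine ⟨x, fun n => SeqLT.ext ?_ fun β hβ => ?_⟩
  · rw [x.res_len (Ordinal.natCast_lt_omega0 n), hlen]
  · rw [x.res_len (Ordinal.natCast_lt_omega0 n)] at hβ
    have hβω : β < ω := hβ.trans (Ordinal.natCast_lt_omega0 n)
    have hle : β.toNat + 1 ≤ n := by
      rw [← Ordinal.natCast_toNat hβω, Nat.cast_lt] at hβ
      exact hβ
    rw [x.res_val (Ordinal.natCast_lt_omega0 n) hβ, show x.val β = _ from if_pos hβω]
    exact (hmono hle).2 β (hmem hβω)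

section Forward

variable {o v : Ordinal.{u}}

def unextendable (f : SeqLT o v → SeqLT o v) (s : SeqLT o v) : Set (SeqFull o v) :=
  {y | (f s).prefixOf y ∧ ∀ β, β < v → ¬(f (s.snoc β)).prefixOf y}

theorem isNowhereDense_unextendable (hv : 0 < v) {f : SeqLT o v → SeqLT o v}
    (hd : IsDenseMap f) (s : SeqLT o v) : IsNowhereDense (unextendable f s) := by
  rw [isNowhereDense_iff hv]
  intro r
  by_cases hcomp : ∃ t, (f s).le t ∧ r.le t
  · obtain ⟨t, hst, hrt⟩ := hcomp
    obtain ⟨β, hβ, hle⟩ := hd s t hst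
    exact ⟨_, SeqLT.le_trans hrt hle, disjoint_left.mpr fun y hy hbad => hbad.2 β hβ hy⟩
  · refine ⟨r, SeqLT.le_refl r, disjoint_left.mpr fun y hy hbad => hcomp ?_⟩
    rcases SeqLT.le_or_le_of_prefixOf hbad.1 hy with h | h
    · exact ⟨r, h, SeqLT.le_refl r⟩
    · exact ⟨f s, SeqLT.le_refl _, h⟩

end Forward

theorem exists_fStarVal_of_notMem_unextendable {v : Ordinal.{u}} {f : SeqLT ω v → SeqLT ω v} (hf : IsHom f)
    {y : SeqFull ω v} (hy : (f (SeqLT.empty ω v)).prefixOf y)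
    (hgood : ∀ s, y ∉ unextendable f s) : ∃ x, FStarVal f x y := by
  have hnext : ∀ s : {s // (f s).prefixOf y}, ∃ β, β < v ∧ (f (s.1.snoc β)).prefixOf y := by
    intro ⟨s, hs⟩
    by_contra! h
    exact hgood s ⟨hs, h⟩
  choose next hnext_lt hnext_prefix using hnext
  let step (s : {s // (f s).prefixOf y}) : {s // (f s).prefixOf y} :=
    ⟨s.1.snoc (next s), hnext_prefix s⟩
  let c (n : ℕ) : {s // (f s).prefixOf y} := step^[n] ⟨SeqLT.empty ω v, hy⟩
  have hc_succ (n : ℕ) : c (n + 1) = step (c n) := Function.iterate_succ_apply' step n _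
  have hc_slt (n : ℕ) : (c n).1.slt (c (n + 1)).1 := by
    rw [hc_succ]
    exact SeqLT.slt_snoc Ordinal.isSuccLimit_omega0 (hnext_lt _)
  have hc_len (n : ℕ) : (c n).1.len = n := by
    induction n with
    | zero => rfl
    | succ n ih =>
      rw [hc_succ, Nat.cast_succ, ← ih]
      exact SeqLT.snoc_len Ordinal.isSuccLimit_omega0 (hnext_lt _)
  have hf_len (n : ℕ) : (n : Ordinal) ≤ (f (c n).1).len := by
    induction n with
    | zero => exact zero_le
    | succ n ih =>
      rw [Nat.cast_succ]
      exact add_one_le_of_lt (ih.trans_lt (hf _ _ (hc_slt n)).2)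
  obtain ⟨x, hx⟩ := SeqFull.exists_res_eq (fun n => (c n).1) hc_len fun n => (hc_slt n).1
  refine ⟨x, fun α hα => ?_, fun β hβ => ?_⟩
  · obtain ⟨n, rfl⟩ := Ordinal.lt_omega0.mp hα
    exact hx n ▸ (c n).2
  · obtain ⟨n, rfl⟩ := Ordinal.lt_omega0.mp hβ
    refine ⟨(n + 1 : ℕ), Ordinal.natCast_lt_omega0 _, ?_⟩
    rw [hx]
    exact (Nat.cast_lt.mpr n.lt_succ_self).trans_le (hf_len (n + 1))

theorem isMeagre_basicOpen_diff_range {f : SeqLT ω ω → SeqLT ω ω} (hf : IsHom f)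
    (hd : IsDenseMap f) :
    IsMeagre (basicOpen (f (SeqLT.empty ω ω)) \ {y | ∃ x, FStarVal f x y}) := by
  refine (isMeagre_iUnion fun s =>
    (isNowhereDense_unextendable Ordinal.omega0_pos hd s).isMeagre).mono fun y ⟨hy, hran⟩ => ?_
  by_contra hbad
  exact hran (exists_fStarVal_of_notMem_unextendable hf hy (by simpa using hbad))

def enumSeq : ℕ → SeqLT.{u} ω ω := (exists_surjective_nat _).choose

theorem enumSeq_surjective : Function.Surjective enumSeq.{u} :=
  (exists_surjective_nat _).choose_spec

namespace AvoidingMap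

variable (E : ℕ → SeqLT.{u} ω ω → SeqLT ω ω)

open scoped Classical in
def step (q : SeqLT.{u} ω ω) (n : ℕ) (β : Ordinal.{u}) : SeqLT ω ω :=
  E n (if q.le (enumSeq β.toNat) then enumSeq β.toNat else q)

def build (t : SeqLT.{u} ω ω) : ℕ → (Ordinal.{u} → Ordinal.{u}) → SeqLT ω ω
  | 0, _ => t
  | n + 1, g => step E (build t n g) n (g n)

end AvoidingMap

open AvoidingMap in
def avoidingMap (E : ℕ → SeqLT.{u} ω ω → SeqLT ω ω) (t s : SeqLT.{u} ω ω) : SeqLT ω ω :=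
  build E t s.len.toNat s.val

namespace AvoidingMap

variable {E : ℕ → SeqLT.{u} ω ω → SeqLT ω ω} (t : SeqLT.{u} ω ω)

theorem slt_step (hE : ∀ n (r : SeqLT ω ω), r.slt (E n r)) (q : SeqLT.{u} ω ω) (n : ℕ)
    (β : Ordinal.{u}) : q.slt (step E q n β) := by
  refine SeqLT.slt_of_le_of_slt ?_ (hE _ _)
  split_ifs with h
  exacts [h, SeqLT.le_refl q]

theorem build_congr {n : ℕ} {g g' : Ordinal.{u} → Ordinal.{u}} (h : ∀ k : ℕ, k < n → g k = g' k) :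
    build E t n g = build E t n g' := by
  induction n with
  | zero => rfl
  | succ n ih =>
    simp only [build, ih fun k hk => h k (hk.trans n.lt_succ_self), h n n.lt_succ_self]

theorem build_slt (hE : ∀ n (r : SeqLT ω ω), r.slt (E n r)) (g : Ordinal.{u} → Ordinal.{u})
    {m n : ℕ} (h : m < n) : (build E t m g).slt (build E t n g) := by
  induction n, h using Nat.le_induction with
  | base => exact slt_step hE _ _ _
  | succ n _ ih => exact SeqLT.slt_trans ih (slt_step hE _ _ _)

end AvoidingMap

open AvoidingMap

section AvoidingMapLemmas

variable {E : ℕ → SeqLT.{u} ω ω → SeqLT ω ω} {t : SeqLT.{u} ω ω}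

theorem avoidingMap_empty : avoidingMap E t (SeqLT.empty ω ω) = t := by
  rw [avoidingMap, show (SeqLT.empty ω ω).len = ((0 : ℕ) : Ordinal) from Nat.cast_zero.symm,
    Ordinal.toNat_natCast]
  rfl

theorem avoidingMap_snoc (s : SeqLT.{u} ω ω) {β : Ordinal.{u}} (hβ : β < ω) :
    avoidingMap E t (s.snoc β) = step E (avoidingMap E t s) s.len.toNat β := by
  have hs := s.len_lt_of_isSuccLimit Ordinal.isSuccLimit_omega0
  have hlen : (s.snoc β).len.toNat = s.len.toNat + 1 := by
    have h := Ordinal.toNat_natCast.{u} (s.len.toNat + 1)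
    rwa [Nat.cast_succ, Ordinal.natCast_toNat hs,
      ← SeqLT.snoc_len Ordinal.isSuccLimit_omega0 hβ] at h
  rw [avoidingMap, hlen, build, avoidingMap, Ordinal.natCast_toNat hs,
    SeqLT.snoc_val_len Ordinal.isSuccLimit_omega0 hβ]
  refine congrArg (step E · _ β) (build_congr _ fun k hk => ?_)
  refine SeqLT.snoc_val_of_lt Ordinal.isSuccLimit_omega0 hβ ?_
  rwa [← Ordinal.natCast_toNat hs, Nat.cast_lt]

theorem avoidingMap_res_add_one (x : SeqFull.{u} ω ω) (n : ℕ) :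
    avoidingMap E t (x.res (n + 1)) = step E (avoidingMap E t (x.res n)) n (x.val n) := by
  have hn := Ordinal.natCast_lt_omega0 n
  rw [x.res_add_one Ordinal.isSuccLimit_omega0 hn, avoidingMap_snoc _ (x.val_lt _ hn),
    x.res_len hn, Ordinal.toNat_natCast]

theorem isHom_avoidingMap (hE : ∀ n (r : SeqLT ω ω), r.slt (E n r)) :
    IsHom (avoidingMap E t) := by
  intro s s' h
  have hs := s.len_lt_of_isSuccLimit Ordinal.isSuccLimit_omega0
  have hs' := s'.len_lt_of_isSuccLimit Ordinal.isSuccLimit_omega0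
  have hlt : s.len.toNat < s'.len.toNat := by
    rw [← Nat.cast_lt (α := Ordinal), Ordinal.natCast_toNat hs, Ordinal.natCast_toNat hs']
    exact h.2
  rw [avoidingMap, avoidingMap, build_congr t fun k hk => h.1.2 k ?_]
  · exact build_slt t hE _ hlt
  · rwa [← Ordinal.natCast_toNat hs, Nat.cast_lt]

theorem isDenseMap_avoidingMap (hE : ∀ n (r : SeqLT ω ω), r.slt (E n r)) :
    IsDenseMap (avoidingMap E t) := by
  intro s r hr
  obtain ⟨m, rfl⟩ := enumSeq_surjective r
  refine ⟨m, Ordinal.natCast_lt_omega0 m, ?_⟩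
  rw [avoidingMap_snoc s (Ordinal.natCast_lt_omega0 m), step, Ordinal.toNat_natCast, if_pos hr]
  exact (hE _ _).1

end AvoidingMapLemmas

theorem exists_isHom_isDenseMap_avoiding {M : Set (SeqFull.{u} ω ω)} (hM : IsMeagre M)
    (t : SeqLT.{u} ω ω) : ∃ f, IsHom f ∧ IsDenseMap f ∧ f (SeqLT.empty ω ω) = t ∧
      ∀ x y, FStarVal f x y → y ∈ basicOpen t \ M := by
  obtain ⟨G, hG, hMG⟩ := hM.exists_nat_isNowhereDense
  choose E hE hEG using fun n =>
    exists_slt_disjoint Ordinal.isSuccLimit_omega0 Ordinal.omega0_pos (hG n)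
  refine ⟨avoidingMap E t, isHom_avoidingMap hE, isDenseMap_avoidingMap hE, avoidingMap_empty,
    fun x y hxy => ⟨?_, fun hyM => ?_⟩⟩
  · have h0 := hxy.1 0 Ordinal.omega0_pos
    rwa [x.res_zero, avoidingMap_empty] at h0
  · obtain ⟨n, hn⟩ := mem_iUnion.mp (hMG hyM)
    have hy := hxy.1 (n + 1 : ℕ) (Ordinal.natCast_lt_omega0 _)
    rw [Nat.cast_succ, avoidingMap_res_add_one] at hy
    exact (hEG n _).notMem_of_mem_left hy hn

theorem almostBaire_iff_isMeagre (A : Set (SeqFull.{u} ω ω)) :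
    AlmostBaire A ↔ (∃ t, IsMeagre (basicOpen t \ A)) ∨ IsMeagre A := by
  constructor
  · rintro ⟨f, hf, hd, hran | ⟨hran, -, hempty⟩⟩
    · exact Or.inl ⟨_, (isMeagre_basicOpen_diff_range hf hd).mono
        (sdiff_subset_sdiff_right fun y (⟨x, hx⟩ : ∃ x, FStarVal f x y) => hran x y hx)⟩
    · refine Or.inr ((isMeagre_basicOpen_diff_range hf hd).mono fun y hy => ?_)
      rw [hempty, basicOpen_empty]
      exact ⟨trivial, fun ⟨x, hx⟩ => hran x y hx hy⟩
  · rintro (⟨t, ht⟩ | hA)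
    · obtain ⟨f, hf, hd, -, hran⟩ := exists_isHom_isDenseMap_avoiding ht t
      exact ⟨f, hf, hd, Or.inl fun x y hxy => by_contra fun hyA =>
        (hran x y hxy).2 ⟨(hran x y hxy).1, hyA⟩⟩
    · obtain ⟨f, hf, hd, hempty, hran⟩ := exists_isHom_isDenseMap_avoiding hA (SeqLT.empty ω ω)
      exact ⟨f, hf, hd, Or.inr ⟨fun x y hxy => (hran x y hxy).2,
        isContinuousMap_of_le_omega0 le_rfl f, hempty⟩⟩

/-- A subset `A` of the Baire space `ω^ω` is almost Baire iff either `A` is comeager in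
some basic open set `N_t`, or the complement of `A` is comeager. -/
theorem statement9 (A : Set (SeqFull Cardinal.aleph0.ord Cardinal.aleph0.ord)) :
    AlmostBaire A ↔
      ((∃ t : SeqLT Cardinal.aleph0.ord Cardinal.aleph0.ord, ComeagerIn A (basicOpen t)) ∨
        ComeagerIn Aᶜ Set.univ) := by
  revert A
  rw [Cardinal.ord_aleph0]
  intro A
  simp only [comeagerIn_iff_isMeagre (isOpen_basicOpen _), comeagerIn_iff_isMeagre isOpen_univ,
    sdiff_compl, univ_inter]
  exact almostBaire_iff_isMeagre A
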